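/- Let A = {a,b,c}, m ≥ 4, and let x₁, x₂ ≥ 1 with x₁ + x₂ = m - 3. If the one-hole-filled word a⋄^{x₁}b⋄^{x₂}a replaces a⋄^{m-2}a, the resulting set {a⋄^{x₁}b⋄^{x₂}a, b⋄^{m-2}b, c⋄^{m-2}c, a⋄^{m-2}b, a⋄^{m-2}c, b⋄^{m-2}c} is avoidable over A. -/
import Mathlib


/-- The three-letter alphabet. -/
inductive ABC | a | b | c
deriving DecidableEq
open ABC

/-- A partial word of length `m` over alphabet `A`. -/
abbrev PW (m : ℕ) (A : Type) := Fin m → Option A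

/-- A two-sided infinite word `w` meets a partial word `u`. -/
def Meets {m : ℕ} {A : Type} (w : ℤ → A) (u : PW m A) : Prop :=
  ∃ i : ℤ, ∀ j : Fin m, ∀ x : A, u j = some x → w (i + (j : ℕ)) = x

/-- A set of partial words is unavoidable over `A`. -/
def Unavoidable {m : ℕ} {A : Type} (X : Set (PW m A)) : Prop :=
  ∀ w : ℤ → A, ∃ u ∈ X, Meets w u

/-- A set of partial words is avoidable over `A`. -/
def Avoidable {m : ℕ} {A : Type} (X : Set (PW m A)) : Prop :=
  ∃ w : ℤ → A, ∀ u ∈ X, ¬ Meets w u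

/-- The partial word `x ⋄^(m-2) y` of length `m`: first letter `x`, last letter `y`,
holes in between. -/
def oneHole {A : Type} (m : ℕ) (x y : A) : PW m A :=
  fun j => if (j : ℕ) = 0 then some x else if (j : ℕ) = m - 1 then some y else none

/-- The partial word `x ⋄^(p-1) d ⋄^(m-p-2) y` of length `m`: first letter `x`,
letter `d` at position `p`, last letter `y`, holes elsewhere. -/
def twoDef {A : Type} (m : ℕ) (x d y : A) (p : ℕ) : PW m A :=
  fun j => if (j : ℕ) = 0 then some x else if (j : ℕ) = p then some d
    else if (j : ℕ) = m - 1 then some y else none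

/-- The two-sided infinite word of period `P` repeating the block `f` (given on `[0, P)`). -/
def periodic {A : Type} (P : ℕ) (f : ℕ → A) : ℤ → A :=
  fun i => f ((i % (P : ℤ)).toNat)

/-- Inserting a `b` into a⋄^(m-2)a makes the minimal ternary set avoidable. -/
theorem stmt_3 (m x₁ x₂ : ℕ) (hm : 4 ≤ m) (hx₁ : 1 ≤ x₁) (hx₂ : 1 ≤ x₂)
    (hsum : x₁ + x₂ = m - 3) :
    Avoidable ({twoDef m a b a (x₁ + 1), oneHole m b b, oneHole m c c,
                oneHole m a b, oneHole m a c, oneHole m b c} : Set (PW m ABC)) := by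
  refine ⟨fun _ => a, ?_⟩
  intro u hu
  have hp : x₁ + 1 < m := by omega
  have h0 : 0 < m := by omega
  have hlast : m - 1 < m := by omega
  simp only [Set.mem_insert_iff, Set.mem_singleton_iff] at hu
  rcases hu with h | h | h | h | h | h <;> subst h <;> rintro ⟨i, hmeet⟩
  · have := hmeet ⟨x₁ + 1, hp⟩ b (by simp [twoDef])
    exact absurd this (by simp)
  · have := hmeet ⟨0, h0⟩ b (by simp [oneHole])
    exact absurd this (by simp)
  · have := hmeet ⟨0, h0⟩ c (by simp [oneHole])
    exact absurd this (by simp)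
  · have := hmeet ⟨m - 1, hlast⟩ b (by simp [oneHole]; omega)
    exact absurd this (by simp)
  · have := hmeet ⟨m - 1, hlast⟩ c (by simp [oneHole]; omega)
    exact absurd this (by simp)
  · have := hmeet ⟨0, h0⟩ b (by simp [oneHole])
    exact absurd this (by simp)
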